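/- a^t-tight closure of ideals is glueable: let p be a prime, let R be a Noetherian commutative ring of characteristic p, let n ≥ 0, let a₁,…,aₙ be ideals of R with aᵢ ∩ R° ≠ ∅ for each i, and let t₁,…,tₙ be nonnegative real numbers. Let (f_α)_{α∈A} be elements of R and let g be an element of the radical of the ideal generated by the f_α. Let J be an ideal of R and z ∈ R such that for every α ∈ A, the image z/1 of z in R_{f_α} lies in the (a₁·R_{f_α})^{t₁}⋯(aₙ·R_{f_α})^{tₙ}-tight closure of J·R_{f_α}. Then the image z/1 of z in R_g lies in the (a₁·R_g)^{t₁}⋯(aₙ·R_g)^{tₙ}-tight closure of J·R_g. -/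

import Mathlib

/-- `offMinimal S` is `S°`, the set of elements of `S` lying outside every minimal prime. -/
def offMinimal (S : Type*) [CommRing S] : Set S :=
  {c : S | ∀ P ∈ minimalPrimes S, c ∉ P}

/-- The bracket power `J^[q]`, generated by `q`-th powers of elements of `J`. -/
def bracketPow {S : Type*} [CommRing S] (J : Ideal S) (q : ℕ) : Ideal S :=
  Ideal.span ((fun a => a ^ q) '' (J : Set S))

/-- The tight closure `J^*` of an ideal `J` in a ring of characteristic `p`. -/
def tightClosure (p : ℕ) {S : Type*} [CommRing S] (J : Ideal S) : Set S :=
  {z : S | ∃ c ∈ offMinimal S, ∃ e₀ : ℕ, ∀ e : ℕ, e₀ ≤ e →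
    c * z ^ p ^ e ∈ bracketPow J (p ^ e)}

/-- The `a₁^{t₁} ⋯ aₙ^{tₙ}`-tight closure of an ideal `J` in a ring of characteristic `p`:
`z` belongs to it if there are `c ∈ S°` and a power `p^e₀` such that
`c ⬝ a₁^{⌈t₁ q⌉} ⋯ aₙ^{⌈tₙ q⌉} ⬝ z^q ⊆ J^[q]` for all `q = p^e ≥ p^e₀`. -/
def atTightClosure (p : ℕ) {S : Type*} [CommRing S] {n : ℕ} (a : Fin n → Ideal S)
    (t : Fin n → ℝ) (J : Ideal S) : Set S :=
  {z : S | ∃ c ∈ offMinimal S, ∃ e₀ : ℕ, ∀ e : ℕ, e₀ ≤ e →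
    ∀ x ∈ (∏ i, a i ^ ⌈t i * (p : ℝ) ^ e⌉₊ : Ideal S),
      c * x * z ^ p ^ e ∈ bracketPow J (p ^ e)}

/-!
Only finitely many `f_α` are needed to put `g` in the radical, so there is a common exponent
`e₀`. Each multiplier `c_α ∈ R_{f_α}°` may be taken to be the image of an element of `R`. The
saturation of `c_α` in `R` is contained in no minimal prime: a minimal prime missing `f_α` misses
`c_α`, and one containing `f_α` misses an element killed by a power of `f_α`. Prime avoidance over
the finitely many minimal primes of the Noetherian ring `R` then gives one `d ∈ R` which is a
multiple of every `c_α` in `R_{f_α}` and whose image lies in `R_g°`. For `y ∈ ∏ aᵢ^{⌈tᵢq⌉}` the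
element `d y z^q` then lies in `J^[q] R_{f_α}` for every such `α` (bracket powers commute with
localization), hence in `J^[q] R_g`.
-/

open Ideal

section RingHom

variable {R S : Type*} [CommRing R] [CommRing S]

theorem offMinimal_mul_isUnit {c u : S} (hc : c ∈ offMinimal S) (hu : IsUnit u) :
    c * u ∈ offMinimal S := fun P hP hcu =>
  (hP.1.1.mem_or_mem hcu).elim (hc P hP) fun huP =>
    hP.1.1.ne_top (P.eq_top_of_isUnit_mem huP hu)

theorem map_prod_pow (φ : R →+* S) {n : ℕ} (a : Fin n → Ideal R) (k : Fin n → ℕ) :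
    (∏ i, a i ^ k i).map φ = ∏ i, (a i).map φ ^ k i := by
  simp only [← mapHom_apply, map_prod, map_pow]

theorem mul_mul_mem_of_mem_map {φ : R →+* S} {I : Ideal R} {K : Ideal S} {u v x : S}
    (h : ∀ y ∈ I, u * φ y * v ∈ K) (hx : x ∈ I.map φ) : u * x * v ∈ K := by
  have hle : I.map φ ≤ K.colon (span {u * v}) := map_le_of_le_comap fun y hy =>
    mem_colon_span_singleton.2 (by rw [mul_comm, mul_right_comm]; exact h y hy)
  have hxuv := mem_colon_span_singleton.1 (hle hx)
  rwa [mul_comm, mul_right_comm] at hxuv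

theorem map_bracketPow_le (φ : R →+* S) (J : Ideal R) (q : ℕ) :
    (bracketPow J q).map φ ≤ bracketPow (J.map φ) q := by
  refine map_le_of_le_comap (span_le.2 ?_)
  rintro _ ⟨b, hb, rfl⟩
  exact mem_comap.2 (map_pow φ b q ▸ subset_span ⟨φ b, mem_map_of_mem φ hb, rfl⟩)

end RingHom

section MinimalPrimes

variable {R : Type*} [CommRing R]

theorem exists_pow_mul_eq_zero_of_mem_minimalPrimes {P : Ideal R} (hP : P ∈ minimalPrimes R)
    {x : R} (hx : x ∈ P) : ∃ u ∉ P, ∃ k : ℕ, x ^ k * u = 0 := by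
  have : P.IsPrime := hP.1.1
  have : Ring.KrullDimLE 0 (Localization.AtPrime P) :=
    Ring.KrullDimLE.of_isLocalization P hP (Localization.AtPrime P)
  obtain ⟨k, hk⟩ := Ring.KrullDimLE.isNilpotent_iff_mem_maximalIdeal.2
    ((IsLocalization.AtPrime.to_map_mem_maximal_iff (Localization.AtPrime P) P x).2 hx)
  rw [← map_pow] at hk
  obtain ⟨u, hu⟩ := (IsLocalization.map_eq_zero_iff P.primeCompl _ _).1 hk
  exact ⟨u, u.2, k, by rw [mul_comm, hu]⟩

theorem Ideal.exists_mem_forall_notMem_of_finite {Ps : Set (Ideal R)} (hPs : Ps.Finite)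
    (hprime : ∀ P ∈ Ps, P.IsPrime) {I : Ideal R} (hI : ∀ P ∈ Ps, ¬ I ≤ P) :
    ∃ d ∈ I, ∀ P ∈ Ps, d ∉ P := by
  have hnot : ¬ (I : Set R) ⊆ ⋃ P ∈ Ps, ((id P : Ideal R) : Set R) := fun hsub => by
    obtain ⟨P, hP, hle⟩ :=
      (subset_union_prime_finite hPs (f := id) ⊥ ⊥ fun P hP _ _ => hprime P hP).1 hsub
    exact hI P hP hle
  simpa [Set.not_subset] using hnot

end MinimalPrimes

section Localization

variable {R S : Type*} [CommRing R] [CommRing S] (M : Submonoid R) [Algebra R S]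
  [IsLocalization M S]
include M

theorem bracketPow_map_algebraMap (J : Ideal R) (q : ℕ) :
    bracketPow (J.map (algebraMap R S)) q = (bracketPow J q).map (algebraMap R S) := by
  refine le_antisymm (span_le.2 ?_) (map_bracketPow_le _ J q)
  rintro _ ⟨y, hy, rfl⟩
  obtain ⟨⟨⟨b, hb⟩, m⟩, hbm⟩ := (IsLocalization.mem_map_algebraMap_iff M S).1 hy
  have hunit : IsUnit (algebraMap R S m ^ q) := (IsLocalization.map_units S m).pow q
  refine (mul_unit_mem_iff_mem _ hunit).1 ?_
  rw [← mul_pow, hbm, ← map_pow]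
  exact mem_map_of_mem _ (subset_span ⟨b, hb, rfl⟩)

theorem algebraMap_mem_offMinimal_iff {d : R} :
    algebraMap R S d ∈ offMinimal S ↔
      ∀ P ∈ minimalPrimes R, Disjoint (M : Set R) P → d ∉ P := by
  have hmin (Q : Ideal S) : Q ∈ minimalPrimes S ↔ Q.under R ∈ minimalPrimes R := by
    have := IsLocalization.minimalPrimes_map M S (⊥ : Ideal R)
    rw [Ideal.map_bot] at this
    exact Set.ext_iff.1 this Q
  constructor
  · intro hd P hP hdisj hdP
    refine hd _ ((hmin _).2 ?_) (mem_map_of_mem _ hdP)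
    rwa [IsLocalization.under_map_of_isPrime_disjoint M S hP.1.1 hdisj]
  · intro hd Q hQ hdQ
    exact hd _ ((hmin Q).1 hQ) ((IsLocalization.disjoint_under_iff M S Q).2 hQ.1.1.ne_top) hdQ

theorem comap_span_singleton_not_le_of_mem_minimalPrimes {c : R}
    (hc : algebraMap R S c ∈ offMinimal S) {P : Ideal R} (hP : P ∈ minimalPrimes R) :
    ¬ (span {algebraMap R S c}).comap (algebraMap R S) ≤ P := by
  intro hle
  by_cases hdisj : Disjoint (M : Set R) P
  · exact (algebraMap_mem_offMinimal_iff M).1 hc P hP hdisj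
      (hle (mem_comap.2 (mem_span_singleton_self _)))
  · obtain ⟨m, hmM, hmP⟩ := Set.not_disjoint_iff.1 hdisj
    obtain ⟨u, huP, k, hu⟩ := exists_pow_mul_eq_zero_of_mem_minimalPrimes hP hmP
    have hu0 : algebraMap R S u = 0 :=
      (IsLocalization.map_eq_zero_iff M S u).2 ⟨⟨m ^ k, pow_mem hmM k⟩, hu⟩
    exact huP (hle (mem_comap.2 (hu0 ▸ zero_mem _)))

theorem exists_multiplier_of_algebraMap_mem_atTightClosure (p : ℕ) {n : ℕ}
    {a : Fin n → Ideal R} {t : Fin n → ℝ} {J : Ideal R} {z : R}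
    (hz : algebraMap R S z ∈
      atTightClosure p (fun i => (a i).map (algebraMap R S)) t (J.map (algebraMap R S))) :
    ∃ c : R, algebraMap R S c ∈ offMinimal S ∧ ∃ e₀ : ℕ, ∀ e : ℕ, e₀ ≤ e →
      ∀ y ∈ (∏ i, a i ^ ⌈t i * (p : ℝ) ^ e⌉₊ : Ideal R),
        algebraMap R S (c * y * z ^ p ^ e) ∈ (bracketPow J (p ^ e)).map (algebraMap R S) := by
  obtain ⟨c₀, hc₀, e₀, hz⟩ := hz
  obtain ⟨⟨c, m⟩, hcm⟩ := IsLocalization.surj M c₀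
  refine ⟨c, hcm ▸ offMinimal_mul_isUnit hc₀ (IsLocalization.map_units S m), e₀,
    fun e he y hy => ?_⟩
  have hy' : algebraMap R S y ∈ ∏ i, (a i).map (algebraMap R S) ^ ⌈t i * (p : ℝ) ^ e⌉₊ := by
    rw [← map_prod_pow]
    exact mem_map_of_mem _ hy
  rw [← bracketPow_map_algebraMap M]
  convert mul_mem_left _ (algebraMap R S m) (hz e he _ hy') using 1
  simp only [map_mul, map_pow, ← hcm]
  ring

end Localization

theorem exists_algebraMap_mem_offMinimal_forall_dvd {R : Type*} [CommRing R] [IsNoetherianRing R]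
    {T : Type*} [CommRing T] [Algebra R T] (N : Submonoid R) [IsLocalization N T] {A : Type*}
    (s : Finset A) (M : A → Submonoid R) (c : A → R)
    (hc : ∀ α ∈ s, algebraMap R (Localization (M α)) (c α) ∈ offMinimal _) :
    ∃ d : R, algebraMap R T d ∈ offMinimal T ∧
      ∀ α ∈ s, algebraMap R (Localization (M α)) (c α) ∣ algebraMap R _ d := by
  set Ps := {P ∈ minimalPrimes R | Disjoint (N : Set R) P}
  have hPs : Ps.Finite := (minimalPrimes.finite_of_isNoetherianRing R).subset fun P hP => hP.1
  obtain ⟨d, hd, hdPs⟩ := exists_mem_forall_notMem_of_finite hPs (fun P hP => hP.1.1.1)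
    (I := ∏ α ∈ s, (span {algebraMap R _ (c α)}).comap (algebraMap R (Localization (M α))))
    fun P hP hle => by
      obtain ⟨α, hα, hle⟩ := (IsPrime.prod_le hP.1.1.1).1 hle
      exact comap_span_singleton_not_le_of_mem_minimalPrimes (M α) (hc α hα) hP.1 hle
  refine ⟨d, (algebraMap_mem_offMinimal_iff N).2 fun P hP hdisj => hdPs P ⟨hP, hdisj⟩,
    fun α hα => ?_⟩
  exact mem_span_singleton.1 (mem_comap.1 ((prod_le_inf.trans (Finset.inf_le hα)) hd))

section Gluing

variable {R : Type*} [CommRing R] {A : Type*} {f : A → R} {g : R}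

theorem exists_finset_mem_radical_span_image (hg : g ∈ (span (Set.range f)).radical) :
    ∃ s : Finset A, g ∈ (span (f '' s)).radical := by
  obtain ⟨m, hm⟩ := hg
  obtain ⟨c, hc⟩ := Finsupp.mem_span_range_iff_exists_finsupp.1 hm
  exact ⟨c.support, m, hc ▸ sum_mem fun α hα => mul_mem_left _ _ (subset_span ⟨α, hα, rfl⟩)⟩

theorem algebraMap_mem_map_away_of_forall {s : Set A} (hg : g ∈ (span (f '' s)).radical)
    {I : Ideal R} {w : R}
    (hw : ∀ α ∈ s, algebraMap R (Localization.Away (f α)) w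
      ∈ I.map (algebraMap R (Localization.Away (f α)))) :
    algebraMap R (Localization.Away g) w ∈ I.map (algebraMap R (Localization.Away g)) := by
  have hspan : span (f '' s) ≤ (I.colon (span {w})).radical := by
    refine span_le.2 ?_
    rintro _ ⟨α, hα, rfl⟩
    obtain ⟨_, ⟨N, rfl⟩, hN⟩ :=
      (IsLocalization.algebraMap_mem_map_algebraMap_iff (Submonoid.powers (f α)) _ I w).1
        (hw α hα)
    exact ⟨N, mem_colon_span_singleton.2 hN⟩
  obtain ⟨K, hK⟩ := radical_le_radical_iff.2 hspan hg
  exact (IsLocalization.algebraMap_mem_map_algebraMap_iff (Submonoid.powers g) _ I w).2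
    ⟨g ^ K, ⟨K, rfl⟩, mem_colon_span_singleton.1 hK⟩

end Gluing

theorem atTightClosure_glueable_general (p : ℕ)
    {R : Type*} [CommRing R] [IsNoetherianRing R]
    {n : ℕ} (a : Fin n → Ideal R)
    (t : Fin n → ℝ)
    {A : Type*} (f : A → R) (g : R)
    (hg : g ∈ (Ideal.span (Set.range f)).radical)
    (J : Ideal R) (z : R)
    (hz : ∀ α : A, algebraMap R (Localization.Away (f α)) z
      ∈ atTightClosure p (fun i => (a i).map (algebraMap R (Localization.Away (f α)))) t
          (J.map (algebraMap R (Localization.Away (f α))))) :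
    algebraMap R (Localization.Away g) z
      ∈ atTightClosure p (fun i => (a i).map (algebraMap R (Localization.Away g))) t
          (J.map (algebraMap R (Localization.Away g))) := by
  obtain ⟨s, hs⟩ := exists_finset_mem_radical_span_image hg
  choose c hc e₀ hcz using fun α =>
    exists_multiplier_of_algebraMap_mem_atTightClosure (Submonoid.powers (f α)) p (hz α)
  obtain ⟨d, hd, hdc⟩ := exists_algebraMap_mem_offMinimal_forall_dvd (T := Localization.Away g)
    (Submonoid.powers g) s (fun α => Submonoid.powers (f α)) c fun α _ => hc α
  refine ⟨algebraMap R _ d, hd, s.sup e₀, fun e he x hx => ?_⟩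
  rw [← map_prod_pow] at hx
  refine mul_mul_mem_of_mem_map (fun y hy => ?_) hx
  rw [← map_mul, ← map_pow, ← map_mul, bracketPow_map_algebraMap (Submonoid.powers g)]
  refine algebraMap_mem_map_away_of_forall hs fun α hα => ?_
  obtain ⟨r, hr⟩ := hdc α hα
  convert mul_mem_left _ r (hcz α e ((Finset.le_sup hα).trans he) y hy) using 1
  simp only [map_mul, hr]
  ring

/-- `a^t`-tight closure of ideals is glueable. -/
theorem atTightClosure_glueable (p : ℕ) (hp : p.Prime)
    {R : Type*} [CommRing R] [IsNoetherianRing R] [CharP R p]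
    {n : ℕ} (a : Fin n → Ideal R) (ha : ∀ i, ∃ c ∈ offMinimal R, c ∈ a i)
    (t : Fin n → ℝ) (ht : ∀ i, 0 ≤ t i)
    {A : Type*} (f : A → R) (g : R)
    (hg : g ∈ (Ideal.span (Set.range f)).radical)
    (J : Ideal R) (z : R)
    (hz : ∀ α : A, algebraMap R (Localization.Away (f α)) z
      ∈ atTightClosure p (fun i => (a i).map (algebraMap R (Localization.Away (f α)))) t
          (J.map (algebraMap R (Localization.Away (f α))))) :
    algebraMap R (Localization.Away g) z
      ∈ atTightClosure p (fun i => (a i).map (algebraMap R (Localization.Away g))) t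
          (J.map (algebraMap R (Localization.Away g))) :=
  atTightClosure_glueable_general p a t f g hg J z hz
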